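/- arXiv:1508.00999 — 2 statements merged into one kernel-verified Lean document; each statement's English description precedes it below -/
import Mathlib

section
/- Let f : [0,∞) → ℝ be continuous with |f(x)| ≤ M_f·(1+x²) for some constant M_f and such that lim_{x→∞} f(x)/(1+x²) exists and is finite. Then for all reals λ > 0 and δ > 0: Ω(f; λδ) ≤ 2·(1+λ)·(1+δ²)·Ω(f; δ). -/
open Filter

/-!
Split a step `h ≤ λδ` into `n = ⌈h/δ⌉ ≤ 1 + λ` equal steps of length at most `δ` and telescope.
Every intermediate point `y` lies in `[x, x + h]`, and `1 + y² ≤ 1 + (x + h)² ≤ 2(1 + h²)(1 + x²)`,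
so each step costs at most `2(1 + δ²)(1 + h²)(1 + x²) Ω(f; δ)`.
-/

/-- First modulus of continuity on `[0,∞)`. -/
noncomputable def omega1 (f : ℝ → ℝ) (δ : ℝ) : ℝ :=
  sSup {y | ∃ h x : ℝ, 0 < h ∧ h ≤ δ ∧ 0 ≤ x ∧ y = |f (x + h) - f x|}

/-- Second modulus of continuity on `[0,∞)`. -/
noncomputable def omega2 (f : ℝ → ℝ) (δ : ℝ) : ℝ :=
  sSup {y | ∃ h x : ℝ, 0 < h ∧ h ≤ δ ∧ 0 ≤ x ∧ y = |f (x + 2 * h) - 2 * f (x + h) + f x|}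

/-- Weighted modulus of continuity `Ω(f;δ)`. -/
noncomputable def OmegaW (f : ℝ → ℝ) (δ : ℝ) : ℝ :=
  sSup {y | ∃ h x : ℝ, 0 < h ∧ h ≤ δ ∧ 0 ≤ x ∧
    y = |f (x + h) - f x| / ((1 + h ^ 2) * (1 + x ^ 2))}

lemma one_add_add_sq_le (x h : ℝ) : 1 + (x + h) ^ 2 ≤ 2 * (1 + h ^ 2) * (1 + x ^ 2) := by
  nlinarith [sq_nonneg (x - h), sq_nonneg (x * h)]

lemma exists_nat_subdivision {h δ : ℝ} (hh : 0 < h) (hδ : 0 < δ) :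
    ∃ n : ℕ, 0 < n ∧ h / n ≤ δ ∧ (n : ℝ) ≤ 1 + h / δ := by
  have hhδ : 0 < h / δ := div_pos hh hδ
  refine ⟨⌈h / δ⌉₊, Nat.one_le_ceil_iff.mpr hhδ, ?_, ?_⟩
  · have hn : (0 : ℝ) < ⌈h / δ⌉₊ := by exact_mod_cast Nat.one_le_ceil_iff.mpr hhδ
    rw [div_le_iff₀ hn, mul_comm, ← div_le_iff₀ hδ]
    exact Nat.le_ceil _
  · linarith [Nat.ceil_lt_add_one hhδ.le]

lemma OmegaW_nonneg (f : ℝ → ℝ) (δ : ℝ) : 0 ≤ OmegaW f δ :=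
  Real.sSup_nonneg (by rintro _ ⟨h, x, -, -, -, rfl⟩; positivity)

section GrowthBound

variable {f : ℝ → ℝ} {M : ℝ} (hM : ∀ x : ℝ, 0 ≤ x → |f x| ≤ M * (1 + x ^ 2))
include hM

lemma bddAbove_OmegaW_set (δ : ℝ) :
    BddAbove {y | ∃ h x : ℝ, 0 < h ∧ h ≤ δ ∧ 0 ≤ x ∧
      y = |f (x + h) - f x| / ((1 + h ^ 2) * (1 + x ^ 2))} := by
  have hM0 : 0 ≤ M := (abs_nonneg _).trans (by simpa using hM 0 le_rfl)
  refine ⟨3 * M, ?_⟩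
  rintro _ ⟨h, x, hh, -, hx, rfl⟩
  rw [div_le_iff₀ (by positivity)]
  have hfx := hM x hx
  have hfxh := hM (x + h) (by positivity)
  have hsq := mul_le_mul_of_nonneg_left (one_add_add_sq_le x h) hM0
  have hprod : 1 + x ^ 2 ≤ (1 + h ^ 2) * (1 + x ^ 2) := by nlinarith [sq_nonneg h, sq_nonneg x]
  nlinarith [abs_sub (f (x + h)) (f x)]

lemma abs_sub_le_OmegaW_mul {δ h x : ℝ} (hh : 0 < h) (hhδ : h ≤ δ) (hx : 0 ≤ x) :
    |f (x + h) - f x| ≤ OmegaW f δ * ((1 + h ^ 2) * (1 + x ^ 2)) := by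
  rw [← div_le_iff₀ (by positivity)]
  exact le_csSup (bddAbove_OmegaW_set hM δ) ⟨h, x, hh, hhδ, hx, rfl⟩

lemma abs_sub_le_OmegaW_of_mem_Icc {δ h h' x y : ℝ} (hh' : 0 < h') (hh'δ : h' ≤ δ)
    (hx : 0 ≤ x) (hy : y ∈ Set.Icc x (x + h)) :
    |f (y + h') - f y| ≤ OmegaW f δ * (2 * (1 + δ ^ 2) * (1 + h ^ 2) * (1 + x ^ 2)) := by
  have hy2 : y ^ 2 ≤ (x + h) ^ 2 := pow_le_pow_left₀ (hx.trans hy.1) hy.2 2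
  have hh'2 : h' ^ 2 ≤ δ ^ 2 := pow_le_pow_left₀ hh'.le hh'δ 2
  calc |f (y + h') - f y|
      ≤ OmegaW f δ * ((1 + h' ^ 2) * (1 + y ^ 2)) :=
        abs_sub_le_OmegaW_mul hM hh' hh'δ (hx.trans hy.1)
    _ ≤ OmegaW f δ * ((1 + δ ^ 2) * (2 * (1 + h ^ 2) * (1 + x ^ 2))) := by
        refine mul_le_mul_of_nonneg_left ?_ (OmegaW_nonneg f δ)
        exact mul_le_mul (by linarith) (by linarith [one_add_add_sq_le x h]) (by positivity)
          (by positivity)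
    _ = OmegaW f δ * (2 * (1 + δ ^ 2) * (1 + h ^ 2) * (1 + x ^ 2)) := by ring

lemma abs_sub_le_OmegaW_subdivision {δ h x : ℝ} (hδ : 0 < δ) (hh : 0 < h) (hx : 0 ≤ x) :
    |f (x + h) - f x| ≤
      (1 + h / δ) * (OmegaW f δ * (2 * (1 + δ ^ 2) * (1 + h ^ 2) * (1 + x ^ 2))) := by
  obtain ⟨n, hn, hstep, hn_le⟩ := exists_nat_subdivision hh hδ
  set C := OmegaW f δ * (2 * (1 + δ ^ 2) * (1 + h ^ 2) * (1 + x ^ 2))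
  have hC : 0 ≤ C := mul_nonneg (OmegaW_nonneg f δ) (by positivity)
  have hn' : (0 : ℝ) < n := by exact_mod_cast hn
  have hstep_pos : 0 < h / n := div_pos hh hn'
  let g : ℕ → ℝ := fun k => f (x + k * (h / n))
  have hg_step : ∀ k ∈ Finset.range n, dist (g k) (g (k + 1)) ≤ C := by
    intro k hk
    have hk : (k : ℝ) ≤ n := by exact_mod_cast (Finset.mem_range.mp hk).le
    have hkh : (k : ℝ) * (h / n) ≤ h := by
      calc (k : ℝ) * (h / n) ≤ n * (h / n) := by gcongr
        _ = h := mul_div_cancel₀ h hn'.ne'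
    have hnext : x + ((k + 1 : ℕ) : ℝ) * (h / n) = x + k * (h / n) + h / n := by push_cast; ring
    rw [dist_comm, Real.dist_eq]
    simp only [g, hnext]
    exact abs_sub_le_OmegaW_of_mem_Icc hM hstep_pos hstep hx
      ⟨le_add_of_nonneg_right (by positivity), by linarith⟩
  calc |f (x + h) - f x| = dist (g 0) (g n) := by
        rw [dist_comm, Real.dist_eq]
        simp only [g, Nat.cast_zero, zero_mul, add_zero, mul_div_cancel₀ h hn'.ne']
    _ ≤ ∑ k ∈ Finset.range n, dist (g k) (g (k + 1)) := dist_le_range_sum_dist g n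
    _ ≤ ∑ _k ∈ Finset.range n, C := Finset.sum_le_sum hg_step
    _ = n * C := by rw [Finset.sum_const, Finset.card_range, nsmul_eq_mul]
    _ ≤ (1 + h / δ) * C := mul_le_mul_of_nonneg_right hn_le hC

end GrowthBound

theorem OmegaW_scaling_general (f : ℝ → ℝ)
    (hgrowth : ∃ Mf : ℝ, ∀ x : ℝ, 0 ≤ x → |f x| ≤ Mf * (1 + x ^ 2)) :
    ∀ lam δ : ℝ, 0 < lam → 0 < δ →
      OmegaW f (lam * δ) ≤ 2 * (1 + lam) * (1 + δ ^ 2) * OmegaW f δ := by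
  obtain ⟨M, hM⟩ := hgrowth
  intro lam δ _ hδ
  refine Real.sSup_le ?_ (mul_nonneg (by positivity) (OmegaW_nonneg f δ))
  rintro _ ⟨h, x, hh, hhlam, hx, rfl⟩
  have hhδ : h / δ ≤ lam := by rwa [div_le_iff₀ hδ]
  rw [div_le_iff₀ (by positivity)]
  calc |f (x + h) - f x|
      ≤ (1 + h / δ) * (OmegaW f δ * (2 * (1 + δ ^ 2) * (1 + h ^ 2) * (1 + x ^ 2))) :=
        abs_sub_le_OmegaW_subdivision hM hδ hh hx
    _ ≤ (1 + lam) * (OmegaW f δ * (2 * (1 + δ ^ 2) * (1 + h ^ 2) * (1 + x ^ 2))) :=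
        mul_le_mul_of_nonneg_right (by linarith)
          (mul_nonneg (OmegaW_nonneg f δ) (by positivity))
    _ = 2 * (1 + lam) * (1 + δ ^ 2) * OmegaW f δ * ((1 + h ^ 2) * (1 + x ^ 2)) := by ring

theorem OmegaW_scaling (f : ℝ → ℝ) (hf : ContinuousOn f (Set.Ici 0))
    (hgrowth : ∃ Mf : ℝ, ∀ x : ℝ, 0 ≤ x → |f x| ≤ Mf * (1 + x ^ 2))
    (hlim : ∃ l : ℝ, Tendsto (fun x : ℝ => f x / (1 + x ^ 2)) atTop (nhds l)) :
    ∀ lam δ : ℝ, 0 < lam → 0 < δ →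
      OmegaW f (lam * δ) ≤ 2 * (1 + lam) * (1 + δ ^ 2) * OmegaW f δ :=
  OmegaW_scaling_general f hgrowth
end

section
/- Let f : [0,∞) → ℝ be continuous with |f(x)| ≤ M_f·(1+x²) for some constant M_f and such that lim_{x→∞} f(x)/(1+x²) exists and is finite. Then for all t, x ∈ [0,∞) and every δ > 0: |f(t) − f(x)| ≤ 2·(|t−x|/δ + 1)·(1+δ²)·Ω(f;δ)·(1+x²)·(1+(t−x)²). -/
open Filter

set_option maxHeartbeats 1600000 in
theorem OmegaW_pointwise_bound (f : ℝ → ℝ) (hf : ContinuousOn f (Set.Ici 0))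
    (hgrowth : ∃ Mf : ℝ, ∀ x : ℝ, 0 ≤ x → |f x| ≤ Mf * (1 + x ^ 2))
    (hlim : ∃ l : ℝ, Tendsto (fun x : ℝ => f x / (1 + x ^ 2)) atTop (nhds l)) :
    ∀ t x δ : ℝ, 0 ≤ t → 0 ≤ x → 0 < δ →
      |f t - f x| ≤
        2 * (|t - x| / δ + 1) * (1 + δ ^ 2) * OmegaW f δ * (1 + x ^ 2) *
          (1 + (t - x) ^ 2) := by
  obtain ⟨Mf, hMf⟩ := hgrowth
  intro t x δ ht hx hδ
  have hMf0 : 0 ≤ Mf := by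
    have := hMf 0 le_rfl
    nlinarith [abs_nonneg (f 0)]
  have hbdd : BddAbove {y | ∃ h x : ℝ, 0 < h ∧ h ≤ δ ∧ 0 ≤ x ∧
      y = |f (x + h) - f x| / ((1 + h ^ 2) * (1 + x ^ 2))} := by
    refine ⟨3 * Mf, ?_⟩
    rintro y ⟨h, z, hh, hhδ, hz, rfl⟩
    rw [div_le_iff₀ (by positivity)]
    have e1 := hMf (z + h) (by linarith)
    have e2 := hMf z hz
    have e3 : |f (z + h) - f z| ≤ |f (z + h)| + |f z| := abs_sub _ _
    nlinarith [abs_nonneg (f (z + h)), abs_nonneg (f z), sq_nonneg (z * h),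
      sq_nonneg h, sq_nonneg z, sq_nonneg (z - h)]
  set Ω := OmegaW f δ with hΩdef
  have hΩ0 : 0 ≤ Ω := Real.sSup_nonneg (by
    rintro y ⟨h, z, hh, _, hz, rfl⟩; positivity)
  have step : ∀ y s : ℝ, 0 ≤ y → 0 < s → s ≤ δ →
      |f (y + s) - f y| ≤ Ω * ((1 + s ^ 2) * (1 + y ^ 2)) := by
    intro y s hy hs hsδ
    have hmem : |f (y + s) - f y| / ((1 + s ^ 2) * (1 + y ^ 2)) ∈
        {y_1 | ∃ h x : ℝ, 0 < h ∧ h ≤ δ ∧ 0 ≤ x ∧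
          y_1 = |f (x + h) - f x| / ((1 + h ^ 2) * (1 + x ^ 2))} :=
      ⟨s, y, hs, hsδ, hy, rfl⟩
    have hle : |f (y + s) - f y| / ((1 + s ^ 2) * (1 + y ^ 2)) ≤ Ω :=
      le_csSup hbdd hmem
    rw [div_le_iff₀ (by positivity)] at hle
    linarith
  clear_value Ω
  have key : ∀ a b : ℝ, 0 ≤ a → a < b →
      |f b - f a| ≤ ((b - a) / δ + 1) *
        (2 * Ω * (1 + δ ^ 2) * (1 + a ^ 2) * (1 + (b - a) ^ 2)) := by
    intro a b ha hab
    have hba : 0 < b - a := by linarith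
    set n : ℕ := ⌈(b - a) / δ⌉₊ with hn
    have hn1 : 0 < n := Nat.ceil_pos.mpr (by positivity)
    have hnpos : (0 : ℝ) < n := by exact_mod_cast hn1
    set s : ℝ := (b - a) / n with hs_def
    have hs : 0 < s := by positivity
    have hsδ : s ≤ δ := by
      rw [hs_def, div_le_iff₀ hnpos]
      have h1 : (b - a) / δ ≤ (n : ℝ) := Nat.le_ceil _
      rw [div_le_iff₀ hδ] at h1
      linarith
    have hns : (n : ℝ) * s = b - a := by
      rw [hs_def]; field_simp [hnpos.ne']
    have hnle : (n : ℝ) ≤ (b - a) / δ + 1 :=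
      (Nat.ceil_lt_add_one (by positivity : 0 ≤ (b - a) / δ)).le
    clear_value s
    clear hs_def
    clear_value n
    clear hn
    have e1 : a + (n : ℝ) * s = b := by rw [hns]; ring
    have e2 : a + ((0 : ℕ) : ℝ) * s = a := by norm_num
    have htel : f b - f a = ∑ k ∈ Finset.range n,
        (f (a + (k + 1 : ℕ) * s) - f (a + k * s)) := by
      rw [Finset.sum_range_sub (fun k : ℕ => f (a + k * s)), e1, e2]
    have hterm : ∀ k ∈ Finset.range n,
        |f (a + (k + 1 : ℕ) * s) - f (a + k * s)| ≤
          2 * Ω * (1 + δ ^ 2) * (1 + a ^ 2) * (1 + (b - a) ^ 2) := by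
      intro k hk
      have hkn : (k : ℝ) ≤ n := by
        exact_mod_cast (Finset.mem_range.mp hk).le
      have hks : (k : ℝ) * s ≤ b - a := by
        rw [← hns]
        exact mul_le_mul_of_nonneg_right hkn hs.le
      have hks0 : (0 : ℝ) ≤ (k : ℝ) * s := by positivity
      have hy : (0 : ℝ) ≤ a + k * s := by linarith
      have harg : a + ((k : ℕ) + 1 : ℕ) * s = (a + k * s) + s := by
        push_cast; ring
      rw [harg]
      have h1 := step (a + k * s) s hy hs hsδ
      have hs2 : s ^ 2 ≤ δ ^ 2 := by nlinarith
      have hk2 : ((k : ℝ) * s) ^ 2 ≤ (b - a) ^ 2 := by nlinarith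
      have hsq : (a + k * s) ^ 2 ≤ 2 * a ^ 2 + 2 * ((k : ℝ) * s) ^ 2 := by
        nlinarith [sq_nonneg (a - k * s)]
      have hprod : 0 ≤ a ^ 2 * (b - a) ^ 2 := by positivity
      have hA : 1 + (a + k * s) ^ 2 ≤ 2 * ((1 + a ^ 2) * (1 + (b - a) ^ 2)) := by
        have h3 : 2 * ((1 + a ^ 2) * (1 + (b - a) ^ 2)) =
            2 + 2 * a ^ 2 + 2 * (b - a) ^ 2 + 2 * (a ^ 2 * (b - a) ^ 2) := by ring
        rw [h3]; linarith
      have h2 : (1 + s ^ 2) * (1 + (a + k * s) ^ 2) ≤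
          2 * (1 + δ ^ 2) * (1 + a ^ 2) * (1 + (b - a) ^ 2) := by
        calc (1 + s ^ 2) * (1 + (a + k * s) ^ 2)
            ≤ (1 + δ ^ 2) * (1 + (a + k * s) ^ 2) :=
              mul_le_mul_of_nonneg_right (by linarith) (by positivity)
          _ ≤ (1 + δ ^ 2) * (2 * ((1 + a ^ 2) * (1 + (b - a) ^ 2))) :=
              mul_le_mul_of_nonneg_left hA (by positivity)
          _ = 2 * (1 + δ ^ 2) * (1 + a ^ 2) * (1 + (b - a) ^ 2) := by ring
      calc |f ((a + k * s) + s) - f (a + k * s)|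
          ≤ Ω * ((1 + s ^ 2) * (1 + (a + k * s) ^ 2)) := h1
        _ ≤ Ω * (2 * (1 + δ ^ 2) * (1 + a ^ 2) * (1 + (b - a) ^ 2)) :=
            mul_le_mul_of_nonneg_left h2 hΩ0
        _ = 2 * Ω * (1 + δ ^ 2) * (1 + a ^ 2) * (1 + (b - a) ^ 2) := by ring
    have hsum : |f b - f a| ≤ (n : ℝ) *
        (2 * Ω * (1 + δ ^ 2) * (1 + a ^ 2) * (1 + (b - a) ^ 2)) := by
      rw [htel]
      calc |∑ k ∈ Finset.range n, (f (a + (k + 1 : ℕ) * s) - f (a + k * s))|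
          ≤ ∑ k ∈ Finset.range n, |f (a + (k + 1 : ℕ) * s) - f (a + k * s)| :=
            Finset.abs_sum_le_sum_abs _ _
        _ ≤ ∑ k ∈ Finset.range n,
              (2 * Ω * (1 + δ ^ 2) * (1 + a ^ 2) * (1 + (b - a) ^ 2)) :=
            Finset.sum_le_sum hterm
        _ = (n : ℝ) * (2 * Ω * (1 + δ ^ 2) * (1 + a ^ 2) * (1 + (b - a) ^ 2)) := by
            rw [Finset.sum_const, Finset.card_range]; simp [nsmul_eq_mul]
    have hC : 0 ≤ 2 * Ω * (1 + δ ^ 2) * (1 + a ^ 2) * (1 + (b - a) ^ 2) := by positivity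
    calc |f b - f a| ≤ (n : ℝ) *
          (2 * Ω * (1 + δ ^ 2) * (1 + a ^ 2) * (1 + (b - a) ^ 2)) := hsum
      _ ≤ ((b - a) / δ + 1) *
          (2 * Ω * (1 + δ ^ 2) * (1 + a ^ 2) * (1 + (b - a) ^ 2)) :=
        mul_le_mul_of_nonneg_right hnle hC
  rcases lt_trichotomy t x with hlt | heq | hgt
  · -- t < x
    have hk := key t x ht hlt
    rw [abs_sub_comm] at hk
    have habs : |t - x| = x - t := by
      rw [abs_of_nonpos (by linarith)]; ring
    have ht2 : t ^ 2 ≤ x ^ 2 := by nlinarith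
    have hfac : 0 ≤ (x - t) / δ + 1 := by
      have := div_nonneg (by linarith : (0:ℝ) ≤ x - t) hδ.le
      linarith
    have h1 : ((x - t) / δ + 1) * (2 * Ω * (1 + δ ^ 2) * (1 + t ^ 2) * (1 + (x - t) ^ 2))
        ≤ ((x - t) / δ + 1) * (2 * Ω * (1 + δ ^ 2) * (1 + x ^ 2) * (1 + (x - t) ^ 2)) := by
      apply mul_le_mul_of_nonneg_left _ hfac
      have hB : (1 : ℝ) + t ^ 2 ≤ 1 + x ^ 2 := by linarith
      calc 2 * Ω * (1 + δ ^ 2) * (1 + t ^ 2) * (1 + (x - t) ^ 2)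
          = (2 * Ω * (1 + δ ^ 2) * (1 + (x - t) ^ 2)) * (1 + t ^ 2) := by ring
        _ ≤ (2 * Ω * (1 + δ ^ 2) * (1 + (x - t) ^ 2)) * (1 + x ^ 2) :=
            mul_le_mul_of_nonneg_left hB (by positivity)
        _ = 2 * Ω * (1 + δ ^ 2) * (1 + x ^ 2) * (1 + (x - t) ^ 2) := by ring
    have heq2 : (x - t) ^ 2 = (t - x) ^ 2 := by ring
    calc |f t - f x| ≤ ((x - t) / δ + 1) *
          (2 * Ω * (1 + δ ^ 2) * (1 + t ^ 2) * (1 + (x - t) ^ 2)) := hk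
      _ ≤ ((x - t) / δ + 1) *
          (2 * Ω * (1 + δ ^ 2) * (1 + x ^ 2) * (1 + (x - t) ^ 2)) := h1
      _ = 2 * (|t - x| / δ + 1) * (1 + δ ^ 2) * Ω * (1 + x ^ 2) * (1 + (t - x) ^ 2) := by
          rw [habs, heq2]; ring
  · -- t = x
    subst heq
    simp only [sub_self, abs_zero]
    positivity
  · -- t > x
    have hk := key x t hx hgt
    have habs : |t - x| = t - x := abs_of_pos (by linarith)
    calc |f t - f x| ≤ ((t - x) / δ + 1) *
          (2 * Ω * (1 + δ ^ 2) * (1 + x ^ 2) * (1 + (t - x) ^ 2)) := hk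
      _ = 2 * (|t - x| / δ + 1) * (1 + δ ^ 2) * Ω * (1 + x ^ 2) * (1 + (t - x) ^ 2) := by
          rw [habs]; ring
end
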